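/- arXiv:1107.2299 — 3 statements merged into one kernel-verified Lean document; each statement's English description precedes it below -/
import Mathlib

section
/- Let V be a finite set with a symmetric hierarchical safe-set family, and let OPT be a feasible edge set of minimum cardinality. Then every edge {x,y} ∈ OPT is a hard pair. -/
/-- There is a path from `x` to `y` in the graph with edge set `E`
all of whose vertices lie in `S`. -/
def SafeWalk {V : Type*} (E : Set (Sym2 V)) (S : Set V) (x y : V) : Prop :=
  ∃ p : (SimpleGraph.fromEdgeSet E).Walk x y, ∀ v ∈ p.support, v ∈ S

/-- The pair `{x,y}` is easy: some `z ∈ S(x,y)` has both `S(x,z)` and `S(y,z)`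
strictly contained in `S(x,y)`. A pair is hard if it is not easy. -/
def Easy {V : Type*} [DecidableEq V] (S : V → V → Finset V) (x y : V) : Prop :=
  ∃ z ∈ S x y, S x z ⊂ S x y ∧ S y z ⊂ S x y

/-!
Deleting an easy edge `{x,y}` (witnessed by `z`) from a feasible set `E` keeps it feasible, so it
cannot lie in a minimum one. First, `x` and `y` stay joined inside `S(x,y)`: the safe paths
`x – z` and `z – y` live in `S(x,z)` and `S(z,y)`, which miss `y` and `x` respectively, so they
avoid the edge. Then any pair `{a,b}` is joined by induction on `|S(a,b)|`: on a safe path from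
`a` to `b` in `E`, replace the edge `{x,y}` by the detour if `S(x,y) ⊆ S(a,b)`, and otherwise by
a path `x – a – y`, which exists by induction since hierarchy forces `S(a,x)` and `S(a,y)` to be
proper subsets of `S(a,b)`.
-/

open SimpleGraph

namespace SafeWalk

variable {V : Type*} {E E' : Set (Sym2 V)} {S S' : Set V} {a b c x y : V}

lemma mono (hE : E ⊆ E') (hS : S ⊆ S') (h : SafeWalk E S a b) : SafeWalk E' S' a b := by
  obtain ⟨p, hp⟩ := h
  refine ⟨p.mapLe (fromEdgeSet_mono hE), fun v hv ↦ hS (hp v ?_)⟩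
  rwa [← p.support_mapLe_eq_support]

lemma symm (h : SafeWalk E S a b) : SafeWalk E S b a := by
  obtain ⟨p, hp⟩ := h
  exact ⟨p.reverse, fun v hv ↦ hp v (by rwa [Walk.support_reverse, List.mem_reverse] at hv)⟩

lemma trans (h₁ : SafeWalk E S a b) (h₂ : SafeWalk E S b c) : SafeWalk E S a c := by
  obtain ⟨p, hp⟩ := h₁
  obtain ⟨q, hq⟩ := h₂
  refine ⟨p.append q, fun v hv ↦ ?_⟩
  rcases (p.mem_support_append_iff q).mp hv with hv | hv
  exacts [hp v hv, hq v hv]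

lemma of_mem (he : s(a, b) ∈ E) (hab : a ≠ b) (ha : a ∈ S) (hb : b ∈ S) : SafeWalk E S a b :=
  ⟨Walk.cons (show (fromEdgeSet E).Adj a b from ⟨he, hab⟩) Walk.nil, by simp [ha, hb]⟩

/-- A safe walk survives replacing `E` by `E'` as soon as every edge of `E` inside `S` is
bridged by a safe walk in `E'`. -/
lemma of_forall_edge (hE : ∀ u v, s(u, v) ∈ E → u ≠ v → u ∈ S → v ∈ S → SafeWalk E' S u v)
    (h : SafeWalk E S a b) : SafeWalk E' S a b := by
  obtain ⟨p, hp⟩ := h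
  induction p with
  | nil => exact ⟨Walk.nil, by simpa using hp⟩
  | @cons u v w huv p ih =>
    have hu : u ∈ S := hp u (by simp)
    have hp' : ∀ t ∈ p.support, t ∈ S := fun t ht ↦ hp t (by simp [ht])
    obtain ⟨he, hne⟩ := huv
    exact (hE u v he hne hu (hp' v p.start_mem_support)).trans (ih hp')

lemma diff_singleton_of_notMem (hy : y ∉ S) (h : SafeWalk E S a b) :
    SafeWalk (E \ {s(x, y)}) S a b := by
  refine of_forall_edge (fun u v he huv hu hv ↦ of_mem ⟨he, ?_⟩ huv hu hv) h
  rintro (heq : s(u, v) = s(x, y))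
  rcases Sym2.eq_iff.mp heq with ⟨-, rfl⟩ | ⟨rfl, -⟩
  exacts [hy hv, hy hu]

end SafeWalk

section Hierarchical

variable {V : Type*} {S : V → V → Finset V} {E : Set (Sym2 V)}

lemma ssubset_left_of_not_subset (hsymm : ∀ x y, S x y = S y x)
    (hhier : ∀ x y z, z ∈ S x y → S x z ⊆ S x y ∧ S z y ⊆ S x y) {a b x y : V}
    (hx : x ∈ S a b) (hy : y ∈ S a b) (hxy : ¬ S x y ⊆ S a b) : S a x ⊂ S a b := by
  refine (hhier a b x hx).1.ssubset_of_ne fun heq ↦ hxy ?_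
  rw [hsymm, ← heq]
  exact (hhier a x y (heq ▸ hy)).2

lemma safeWalk_diff_of_easy [DecidableEq V] (hsymm : ∀ x y, S x y = S y x)
    (hhier : ∀ x y z, z ∈ S x y → S x z ⊆ S x y ∧ S z y ⊆ S x y)
    (hfeas : ∀ a b, SafeWalk E ↑(S a b) a b) {x y : V} (h : Easy S x y) :
    SafeWalk (E \ {s(x, y)}) ↑(S x y) x y := by
  obtain ⟨z, hz, hxz, hyz⟩ := h
  have hy : y ∉ S x z := fun hy ↦ hxz.not_subset (hhier x z y hy).1
  have hx : x ∉ S y z := fun hx ↦ hyz.not_subset (hsymm x y ▸ (hhier y z x hx).1)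
  have hxz' : SafeWalk (E \ {s(x, y)}) ↑(S x y) x z :=
    ((hfeas x z).diff_singleton_of_notMem hy).mono subset_rfl (hhier x y z hz).1
  have hyz' : SafeWalk (E \ {s(y, x)}) ↑(S x y) y z :=
    ((hfeas y z).diff_singleton_of_notMem hx).mono subset_rfl (by
      rw [hsymm y z]; exact (hhier x y z hz).2)
  rw [Sym2.eq_swap] at hyz'
  exact hxz'.trans hyz'.symm

theorem feasible_diff_singleton (hsymm : ∀ x y, S x y = S y x)
    (hhier : ∀ x y z, z ∈ S x y → S x z ⊆ S x y ∧ S z y ⊆ S x y)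
    (hfeas : ∀ a b, SafeWalk E ↑(S a b) a b) {x y : V}
    (hdetour : SafeWalk (E \ {s(x, y)}) ↑(S x y) x y) (a b : V) :
    SafeWalk (E \ {s(x, y)}) ↑(S a b) a b := by
  have hjoin : x ∈ S a b → y ∈ S a b → SafeWalk (E \ {s(x, y)}) ↑(S a b) x y := by
    intro hx hy
    by_cases hxy : S x y ⊆ S a b
    · exact hdetour.mono subset_rfl hxy
    have hax := ssubset_left_of_not_subset hsymm hhier hx hy hxy
    have hay := ssubset_left_of_not_subset hsymm hhier hy hx (by rwa [hsymm])
    have : (S a x).card < (S a b).card := Finset.card_lt_card hax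
    have : (S a y).card < (S a b).card := Finset.card_lt_card hay
    exact ((feasible_diff_singleton hsymm hhier hfeas hdetour a x).mono subset_rfl
      (Finset.coe_subset.mpr hax.subset)).symm.trans
      ((feasible_diff_singleton hsymm hhier hfeas hdetour a y).mono subset_rfl
      (Finset.coe_subset.mpr hay.subset))
  refine (hfeas a b).of_forall_edge fun u v he huv hu hv ↦ ?_
  by_cases heq : s(u, v) = s(x, y)
  · rcases Sym2.eq_iff.mp heq with ⟨rfl, rfl⟩ | ⟨rfl, rfl⟩
    exacts [hjoin hu hv, (hjoin hv hu).symm]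
  · exact SafeWalk.of_mem ⟨he, heq⟩ huv hu hv
termination_by (S a b).card

end Hierarchical

theorem stmt16_general {V : Type*} [DecidableEq V] (S : V → V → Finset V)
    (hsymm : ∀ x y, S x y = S y x)
    (hhier : ∀ x y z, z ∈ S x y → S x z ⊆ S x y ∧ S z y ⊆ S x y)
    (OPT : Finset (Sym2 V))
    (hfeas : ∀ x y, SafeWalk ↑OPT ↑(S x y) x y)
    (hmin : ∀ G' : Finset (Sym2 V), (∀ x y, SafeWalk ↑G' ↑(S x y) x y) →
      OPT.card ≤ G'.card) :
    ∀ e ∈ OPT, ∀ x y : V, e = s(x, y) → ¬ Easy S x y := by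
  rintro e he x y rfl hEasy
  have hfeas' : ∀ a b, SafeWalk ↑(OPT.erase s(x, y)) ↑(S a b) a b := by
    rw [Finset.coe_erase]
    exact feasible_diff_singleton hsymm hhier hfeas
      (safeWalk_diff_of_easy hsymm hhier hfeas hEasy)
  have := hmin _ hfeas'
  have := Finset.card_erase_lt_of_mem he
  omega

/-- Every edge of a minimum-cardinality feasible edge set is a hard pair. -/
theorem stmt16 {V : Type*} [Fintype V] [DecidableEq V] (S : V → V → Finset V)
    (hmem : ∀ x y, x ∈ S x y ∧ y ∈ S x y)
    (hsymm : ∀ x y, S x y = S y x)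
    (hhier : ∀ x y z, z ∈ S x y → S x z ⊆ S x y ∧ S z y ⊆ S x y)
    (OPT : Finset (Sym2 V))
    (hfeas : ∀ x y, SafeWalk ↑OPT ↑(S x y) x y)
    (hmin : ∀ G' : Finset (Sym2 V), (∀ x y, SafeWalk ↑G' ↑(S x y) x y) →
      OPT.card ≤ G'.card) :
    ∀ e ∈ OPT, ∀ x y : V, e = s(x, y) → ¬ Easy S x y :=
  stmt16_general S hsymm hhier OPT hfeas hmin
end

section
/- Let V be a finite set with a symmetric hierarchical safe-set family, let OPT be a feasible edge set of minimum cardinality, and let ⪯ be a linear order on the hard pairs such that {a,b} ⪯ {c,d} implies |S(a,b)| ≤ |S(c,d)|. Assign each edge {u,v} ∈ OPT to the ⪯-first hard pair {x,y} with u, v ∈ S(x,y) (such a pair exists since {u,v} itself is hard), and for a hard pair {x,y} let OPT_{⪯{x,y}} be the set of edges assigned to pairs ⪯ {x,y}. Then for every hard pair {x,y}, the graph on vertex set S(x,y) whose edges are those of OPT_{⪯{x,y}} with both endpoints in S(x,y) is connected. -/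
theorem SimpleGraph.Walk.reachable_of_adj_of_support_subset {V : Type*} {G H : SimpleGraph V}
    {T : Set V} (hGH : ∀ a b, G.Adj a b → a ∈ T → b ∈ T → H.Adj a b) {u v : V}
    (p : G.Walk u v) (hp : ∀ w ∈ p.support, w ∈ T) : H.Reachable u v := by
  refine ⟨p.transfer H fun e he => ?_⟩
  induction e using Sym2.ind with
  | h a b =>
    exact hGH a b (p.adj_of_mem_edges he) (hp a (p.fst_mem_support_of_mem_edges he))
      (hp b (p.snd_mem_support_of_mem_edges he))

namespace SafeWalk

variable {V : Type*} {E F : Set (Sym2 V)} {S T : Set V} {x y : V}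

theorem mono_s17 (h : SafeWalk E S x y) (hST : S ⊆ T) : SafeWalk E T x y :=
  let ⟨p, hp⟩ := h
  ⟨p, fun w hw => hST (hp w hw)⟩

theorem reachable (h : SafeWalk E S x y) (hEF : ∀ e ∈ E, (∀ w ∈ e, w ∈ S) → e ∈ F) :
    (SimpleGraph.fromEdgeSet F).Reachable x y := by
  obtain ⟨p, hp⟩ := h
  refine p.reachable_of_adj_of_support_subset (fun a b hab ha hb => ?_) hp
  rw [SimpleGraph.fromEdgeSet_adj] at hab ⊢
  refine ⟨hEF _ hab.1 fun w hw => ?_, hab.2⟩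
  rcases Sym2.mem_iff.mp hw with rfl | rfl
  exacts [ha, hb]

end SafeWalk

theorem stmt17_general {V : Type*} (S : V → V → Finset V)
    (hhier : ∀ x y z, z ∈ S x y → S x z ⊆ S x y ∧ S z y ⊆ S x y)
    (OPT : Finset (Sym2 V))
    (hfeas : ∀ x y, SafeWalk ↑OPT ↑(S x y) x y)
    -- `ps` is an enumeration of the hard pairs, sorted by safe-set cardinality
    (N : ℕ) (ps : Fin N → V × V)
    -- `asgn` assigns each edge of `OPT` to the first hard pair whose safe set
    -- contains both endpoints
    (asgn : Sym2 V → Fin N)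
    (hasgnMin : ∀ e ∈ OPT, ∀ k : Fin N,
      (∀ w ∈ e, w ∈ S (ps k).1 (ps k).2) → asgn e ≤ k) :
    ∀ k : Fin N, ∀ u ∈ S (ps k).1 (ps k).2, ∀ v ∈ S (ps k).1 (ps k).2,
      (SimpleGraph.fromEdgeSet
        {e : Sym2 V | e ∈ OPT ∧ asgn e ≤ k ∧
          ∀ w ∈ e, w ∈ S (ps k).1 (ps k).2}).Reachable u v := by
  intro k u hu v hv
  have reachable_from_fst : ∀ w ∈ S (ps k).1 (ps k).2, (SimpleGraph.fromEdgeSet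
      {e : Sym2 V | e ∈ OPT ∧ asgn e ≤ k ∧
        ∀ w ∈ e, w ∈ S (ps k).1 (ps k).2}).Reachable (ps k).1 w := fun w hw =>
    ((hfeas _ w).mono_s17 (by exact_mod_cast (hhier _ _ w hw).1)).reachable
      fun e he heS => ⟨he, hasgnMin e he k heS, heS⟩
  exact (reachable_from_fst u hu).symm.trans (reachable_from_fst v hv)

/-- Let `OPT` be a minimum feasible edge set, let `ps` enumerate the hard pairs
(with distinct endpoints) in an order `⪯` monotone in safe-set cardinality, and
assign each edge of `OPT` to the `⪯`-first hard pair whose safe set contains both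
of its endpoints.  Then for every hard pair `p_k`, the restriction to `S(p_k)` of
the set of edges assigned to pairs `⪯ p_k` is connected on `S(p_k)`. -/
theorem stmt17 {V : Type*} [Fintype V] [DecidableEq V] (S : V → V → Finset V)
    (hmem : ∀ x y, x ∈ S x y ∧ y ∈ S x y)
    (hsymm : ∀ x y, S x y = S y x)
    (hhier : ∀ x y z, z ∈ S x y → S x z ⊆ S x y ∧ S z y ⊆ S x y)
    (OPT : Finset (Sym2 V))
    (hfeas : ∀ x y, SafeWalk ↑OPT ↑(S x y) x y)
    (hmin : ∀ G' : Finset (Sym2 V), (∀ x y, SafeWalk ↑G' ↑(S x y) x y) →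
      OPT.card ≤ G'.card)
    -- `ps` is an enumeration of the hard pairs, sorted by safe-set cardinality
    (N : ℕ) (ps : Fin N → V × V)
    (hpsHard : ∀ k, (ps k).1 ≠ (ps k).2 ∧ ¬ Easy S (ps k).1 (ps k).2)
    (hpsSurj : ∀ x y : V, x ≠ y → ¬ Easy S x y →
      ∃ k, ps k = (x, y) ∨ ps k = (y, x))
    (hpsInj : ∀ k k' : Fin N,
      (ps k' = ps k ∨ ps k' = ((ps k).2, (ps k).1)) → k' = k)
    (hpsMono : ∀ k k' : Fin N, k ≤ k' →
      (S (ps k).1 (ps k).2).card ≤ (S (ps k').1 (ps k').2).card)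
    -- `asgn` assigns each edge of `OPT` to the first hard pair whose safe set
    -- contains both endpoints
    (asgn : Sym2 V → Fin N)
    (hasgnMem : ∀ e ∈ OPT, ∀ w ∈ e, w ∈ S (ps (asgn e)).1 (ps (asgn e)).2)
    (hasgnMin : ∀ e ∈ OPT, ∀ k : Fin N,
      (∀ w ∈ e, w ∈ S (ps k).1 (ps k).2) → asgn e ≤ k) :
    ∀ k : Fin N, ∀ u ∈ S (ps k).1 (ps k).2, ∀ v ∈ S (ps k).1 (ps k).2,
      (SimpleGraph.fromEdgeSet
        {e : Sym2 V | e ∈ OPT ∧ asgn e ≤ k ∧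
          ∀ w ∈ e, w ∈ S (ps k).1 (ps k).2}).Reachable u v :=
  stmt17_general S hhier OPT hfeas N ps asgn hasgnMin
end

section
/- Let V be a finite set with a symmetric hierarchical safe-set family, and let ⪯ be a linear order on the hard pairs such that {a,b} ⪯ {c,d} implies |S(a,b)| ≤ |S(c,d)|. Consider any greedy run: processing the hard pairs p_1 ≺ p_2 ≺ … ≺ p_N in order, set A_0 = ∅ and A_k = A_{k−1} ∪ F_k where F_k is a minimum-cardinality set of edges with both endpoints in S(p_k) making the restriction of A_{k−1} ∪ F_k to S(p_k) connected. Then the final edge set A_N is a feasible solution and |A_N| ≤ |OPT| for every feasible edge set OPT; that is, the greedy algorithm produces a minimum-cardinality feasible solution to Constrained Connectivity-Sum with symmetric hierarchical safe sets. -/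
/-!
For a hard pair `{x,y}` every `z ∈ S(x,y)` has `S(x,z) = S(x,y)` or `S(y,z) = S(x,y)`, so a
feasible solution connects the whole of `S(x,y)` inside it, and `S(x,y)` is closed under `S`.
Easy pairs are connected through an intermediate vertex with strictly smaller safe sets, so by
induction on `|S(u,v)|` the greedy edges connect every pair once all hard pairs of no larger
safe set have been processed. For the bound, charge step `k` to the edges of `OPT` inside
`S(p_k)` whose endpoints are not yet connected inside `S(p_k)` by `A_{k-1}`: together with
`A_{k-1}` they connect `S(p_k)`, so `|F_k|` is at most their number. An `OPT` edge `{p,q}`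
charged at step `j` must have `S(p,q) = S(p_j)` (otherwise `p,q` were already connected), so after
step `j` it is connected inside every later hard safe set containing it and is never charged
again. The charged sets are thus disjoint subsets of `OPT`.
-/

open Finset

section

variable {V : Type*}

def restrictGraph (E : Finset (Sym2 V)) (T : Finset V) : SimpleGraph V :=
  SimpleGraph.fromEdgeSet {e | e ∈ E ∧ ∀ w ∈ e, w ∈ T}

def ConnectsWithin (E : Finset (Sym2 V)) (T : Finset V) : Prop :=
  ∀ u ∈ T, ∀ v ∈ T, (restrictGraph E T).Reachable u v

def Feasible (S : V → V → Finset V) (E : Finset (Sym2 V)) : Prop :=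
  ∀ x y, SafeWalk ↑E ↑(S x y) x y

lemma restrictGraph_adj {E : Finset (Sym2 V)} {T : Finset V} {a b : V} :
    (restrictGraph E T).Adj a b ↔ s(a, b) ∈ E ∧ a ∈ T ∧ b ∈ T ∧ a ≠ b := by
  simp [restrictGraph, and_assoc]

lemma restrictGraph_mono {E E' : Finset (Sym2 V)} {T T' : Finset V} (hE : E ⊆ E')
    (hT : T ⊆ T') : restrictGraph E T ≤ restrictGraph E' T' :=
  SimpleGraph.fromEdgeSet_mono fun _ ⟨he, hw⟩ => ⟨hE he, fun w hwe => hT (hw w hwe)⟩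

lemma restrictGraph_le_fromEdgeSet {E : Finset (Sym2 V)} {T : Finset V} :
    restrictGraph E T ≤ SimpleGraph.fromEdgeSet ↑E :=
  SimpleGraph.fromEdgeSet_mono fun _ he => he.1

lemma reachable_restrictGraph_of_safeWalk {E : Finset (Sym2 V)} {T : Finset V} {x y : V}
    (h : SafeWalk ↑E ↑T x y) : (restrictGraph E T).Reachable x y := by
  obtain ⟨p, hp⟩ := h
  refine ⟨p.transfer _ fun e he => ?_⟩
  have hE := p.edges_subset_edgeSet he
  rw [restrictGraph, SimpleGraph.edgeSet_fromEdgeSet] at *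
  exact ⟨⟨hE.1, fun w hw => hp w (p.mem_support_of_mem_edges he hw)⟩, hE.2⟩

lemma safeWalk_of_reachable_restrictGraph {E : Finset (Sym2 V)} {T : Finset V} {x y : V}
    (hx : x ∈ T) (h : (restrictGraph E T).Reachable x y) : SafeWalk ↑E ↑T x y := by
  obtain ⟨p⟩ := h
  refine ⟨p.mapLe restrictGraph_le_fromEdgeSet, ?_⟩
  simp only [SimpleGraph.Walk.support_mapLe_eq_support]
  rw [← p.cons_tail_support, ← p.map_snd_darts]
  simp only [List.mem_cons, List.mem_map]
  rintro v (rfl | ⟨d, -, rfl⟩)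
  · exact hx
  · exact (restrictGraph_adj.1 d.adj).2.2.1

lemma SimpleGraph.Reachable.of_forall_adj_reachable {G H : SimpleGraph V}
    (h : ∀ a b, G.Adj a b → H.Reachable a b) {u v : V} (huv : G.Reachable u v) :
    H.Reachable u v := by
  rw [SimpleGraph.reachable_iff_reflTransGen] at huv
  induction huv with
  | refl => rfl
  | tail _ hab ih => exact ih.trans (h _ _ hab)

open Classical in
noncomputable def bridgingEdges (E B : Finset (Sym2 V)) (T : Finset V) : Finset (Sym2 V) :=
  {e ∈ E | (∀ w ∈ e, w ∈ T) ∧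
    e ∉ Sym2.fromRel (r := (restrictGraph B T).Reachable) ⟨fun _ _ h => h.symm⟩}

lemma mem_bridgingEdges {E B : Finset (Sym2 V)} {T : Finset V} {a b : V} :
    s(a, b) ∈ bridgingEdges E B T ↔
      s(a, b) ∈ E ∧ a ∈ T ∧ b ∈ T ∧ ¬ (restrictGraph B T).Reachable a b := by
  simp [bridgingEdges, and_assoc]

open Classical in
lemma bridgingEdges_subset (E B : Finset (Sym2 V)) (T : Finset V) :
    bridgingEdges E B T ⊆ E :=
  filter_subset _ _

open Classical in
lemma mem_of_mem_bridgingEdges {E B : Finset (Sym2 V)} {T : Finset V} {e : Sym2 V}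
    (he : e ∈ bridgingEdges E B T) : ∀ w ∈ e, w ∈ T :=
  (mem_filter.1 he).2.1

variable [DecidableEq V]

lemma ConnectsWithin.union_bridgingEdges {E : Finset (Sym2 V)} {T : Finset V}
    (hE : ConnectsWithin E T) (B : Finset (Sym2 V)) :
    ConnectsWithin (B ∪ bridgingEdges E B T) T := by
  intro u hu v hv
  refine (hE u hu v hv).of_forall_adj_reachable fun a b hab => ?_
  obtain ⟨he, ha, hb, hne⟩ := restrictGraph_adj.1 hab
  by_cases hr : (restrictGraph B T).Reachable a b
  · exact hr.mono (restrictGraph_mono subset_union_left subset_rfl)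
  · refine SimpleGraph.Adj.reachable (restrictGraph_adj.2 ⟨?_, ha, hb, hne⟩)
    exact mem_union_right _ (mem_bridgingEdges.2 ⟨he, ha, hb, hr⟩)

variable {S : V → V → Finset V}

lemma safeSet_eq_or_eq_of_not_easy (hsymm : ∀ x y, S x y = S y x)
    (hhier : ∀ x y z, z ∈ S x y → S x z ⊆ S x y ∧ S z y ⊆ S x y) {x y z : V}
    (hxy : ¬ Easy S x y) (hz : z ∈ S x y) : S x z = S x y ∨ S y z = S x y := by
  by_contra! h
  refine hxy ⟨z, hz, (hhier x y z hz).1.ssubset_of_ne h.1, ?_⟩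
  exact (hsymm y z ▸ (hhier x y z hz).2).ssubset_of_ne h.2

lemma safeSet_subset_of_not_easy (hsymm : ∀ x y, S x y = S y x)
    (hhier : ∀ x y z, z ∈ S x y → S x z ⊆ S x y ∧ S z y ⊆ S x y) {x y u v : V}
    (hxy : ¬ Easy S x y) (hu : u ∈ S x y) (hv : v ∈ S x y) : S u v ⊆ S x y := by
  rw [hsymm u v]
  rcases safeSet_eq_or_eq_of_not_easy hsymm hhier hxy hu with h | h
  · rw [← h] at hv ⊢
    exact (hhier x u v hv).2
  · rw [← h] at hv ⊢
    exact (hhier y u v hv).2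

lemma Feasible.connectsWithin_of_not_easy (hsymm : ∀ x y, S x y = S y x)
    (hhier : ∀ x y z, z ∈ S x y → S x z ⊆ S x y ∧ S z y ⊆ S x y) {E : Finset (Sym2 V)}
    (hE : Feasible S E) {x y : V} (hxy : ¬ Easy S x y) : ConnectsWithin E (S x y) := by
  have hx : ∀ z ∈ S x y, (restrictGraph E (S x y)).Reachable x z := by
    intro z hz
    rcases safeSet_eq_or_eq_of_not_easy hsymm hhier hxy hz with h | h
    · rw [← h]
      exact reachable_restrictGraph_of_safeWalk (hE x z)
    · refine (reachable_restrictGraph_of_safeWalk (hE x y)).trans ?_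
      rw [← h]
      exact reachable_restrictGraph_of_safeWalk (hE y z)
  exact fun u hu v hv => (hx u hu).symm.trans (hx v hv)

lemma subset_of_le_of_forall_subset_succ {α : Type*} {N : ℕ} {A : ℕ → Finset α}
    (hsucc : ∀ k : Fin N, A k ⊆ A (k + 1)) {m m' : ℕ} (hm : m ≤ m') (hm' : m' ≤ N) :
    A m ⊆ A m' := by
  induction hm with
  | refl => exact subset_rfl
  | step _ ih => exact (ih (by omega)).trans (hsucc ⟨_, by omega⟩)

section Greedy

variable {N : ℕ} {T : Fin N → Finset V} {A : ℕ → Finset (Sym2 V)}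

lemma reachable_restrictGraph_of_card_lt (hmem : ∀ x y, x ∈ S x y ∧ y ∈ S x y)
    (hcover : ∀ u v, u ≠ v → ¬ Easy S u v → ∃ k, T k = S u v)
    (hconn : ∀ k : Fin N, ConnectsWithin (A (k + 1)) (T k))
    (hsucc : ∀ k : Fin N, A k ⊆ A (k + 1)) {m : ℕ} (hm : m ≤ N) (u v : V)
    (hlt : ∀ k : Fin N, m ≤ k → #(S u v) < #(T k)) :
    (restrictGraph (A m) (S u v)).Reachable u v := by
  induction h : #(S u v) using Nat.strong_induction_on generalizing u v with
  | _ n ih =>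
  subst h
  by_cases huv : u = v
  · exact huv ▸ SimpleGraph.Reachable.refl _
  by_cases heasy : Easy S u v
  · obtain ⟨z, -, huz, hvz⟩ := heasy
    have hu := ih _ (card_lt_card huz) u z (fun k hk => (card_lt_card huz).trans (hlt k hk))
      rfl
    have hv := ih _ (card_lt_card hvz) v z (fun k hk => (card_lt_card hvz).trans (hlt k hk))
      rfl
    exact (hu.mono (restrictGraph_mono subset_rfl huz.subset)).trans
      (hv.mono (restrictGraph_mono subset_rfl hvz.subset)).symm
  · obtain ⟨k, hk⟩ := hcover u v huv heasy
    have hkm : (k : ℕ) < m := by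
      by_contra! hmk
      exact (hlt k hmk).ne (congrArg card hk).symm
    have huv_mem := hmem u v
    rw [← hk] at huv_mem ⊢
    exact (hconn k u huv_mem.1 v huv_mem.2).mono
      (restrictGraph_mono (subset_of_le_of_forall_subset_succ hsucc hkm hm) subset_rfl)

lemma disjoint_bridgingEdges (hmem : ∀ x y, x ∈ S x y ∧ y ∈ S x y)
    (hcover : ∀ u v, u ≠ v → ¬ Easy S u v → ∃ k, T k = S u v)
    (hconn : ∀ k : Fin N, ConnectsWithin (A (k + 1)) (T k))
    (hsucc : ∀ k : Fin N, A k ⊆ A (k + 1))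
    (hclosed : ∀ k, ∀ u ∈ T k, ∀ v ∈ T k, S u v ⊆ T k) (hcard : Monotone fun k => #(T k))
    (E : Finset (Sym2 V)) {j k : Fin N} (hjk : j < k) :
    Disjoint (bridgingEdges E (A j) (T j)) (bridgingEdges E (A k) (T k)) := by
  rw [disjoint_left]
  intro e hej hek
  induction e using Sym2.ind with | _ p q => ?_
  obtain ⟨-, hpj, hqj, hnj⟩ := mem_bridgingEdges.1 hej
  obtain ⟨-, hpk, hqk, hnk⟩ := mem_bridgingEdges.1 hek
  -- a pair with a strictly smaller safe set was already connected before step `j`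
  have hSj : S p q = T j := by
    by_contra hne
    have hlt := card_lt_card ((hclosed j p hpj q hqj).ssubset_of_ne hne)
    refine hnj ((reachable_restrictGraph_of_card_lt hmem hcover hconn hsucc j.isLt.le p q
      fun i hi => hlt.trans_le (hcard hi)).mono ?_)
    exact restrictGraph_mono subset_rfl (hclosed j p hpj q hqj)
  refine hnk ((hconn j p hpj q hqj).mono (restrictGraph_mono ?_ ?_))
  · exact subset_of_le_of_forall_subset_succ hsucc hjk k.isLt.le
  · exact hSj ▸ hclosed k p hpk q hqk

lemma pairwiseDisjoint_bridgingEdges (hmem : ∀ x y, x ∈ S x y ∧ y ∈ S x y)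
    (hcover : ∀ u v, u ≠ v → ¬ Easy S u v → ∃ k, T k = S u v)
    (hconn : ∀ k : Fin N, ConnectsWithin (A (k + 1)) (T k))
    (hsucc : ∀ k : Fin N, A k ⊆ A (k + 1))
    (hclosed : ∀ k, ∀ u ∈ T k, ∀ v ∈ T k, S u v ⊆ T k) (hcard : Monotone fun k => #(T k))
    (E : Finset (Sym2 V)) :
    ((univ : Finset (Fin N)) : Set (Fin N)).PairwiseDisjoint
      fun k => bridgingEdges E (A k) (T k) := by
  intro j _ k _ hjk
  rcases hjk.lt_or_gt with h | h
  · exact disjoint_bridgingEdges hmem hcover hconn hsucc hclosed hcard E h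
  · exact (disjoint_bridgingEdges hmem hcover hconn hsucc hclosed hcard E h).symm

lemma card_le_sum_card_of_succ_eq_union {F : Fin N → Finset (Sym2 V)} (hA0 : A 0 = ∅)
    (hsucc : ∀ k : Fin N, A (k + 1) = A k ∪ F k) : #(A N) ≤ ∑ k, #(F k) := by
  have hsub : ∀ n ≤ N, A n ⊆ univ.biUnion F := by
    intro n hn
    induction n with
    | zero => simp [hA0]
    | succ n ih =>
      rw [show A (n + 1) = A n ∪ F ⟨n, hn⟩ from hsucc ⟨n, hn⟩]
      exact union_subset (ih (by omega)) (subset_biUnion_of_mem F (mem_univ _))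
  exact (card_le_card (hsub N le_rfl)).trans card_biUnion_le

end Greedy

end

theorem stmt19_general {V : Type*} [DecidableEq V] (S : V → V → Finset V)
    (hmem : ∀ x y, x ∈ S x y ∧ y ∈ S x y)
    (hsymm : ∀ x y, S x y = S y x)
    (hhier : ∀ x y z, z ∈ S x y → S x z ⊆ S x y ∧ S z y ⊆ S x y)
    -- `ps` is an enumeration of the hard pairs, sorted by safe-set cardinality
    (N : ℕ) (ps : Fin N → V × V)
    (hpsHard : ∀ k, (ps k).1 ≠ (ps k).2 ∧ ¬ Easy S (ps k).1 (ps k).2)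
    (hpsSurj : ∀ x y : V, x ≠ y → ¬ Easy S x y →
      ∃ k, ps k = (x, y) ∨ ps k = (y, x))
    (hpsMono : ∀ k k' : Fin N, k ≤ k' →
      (S (ps k).1 (ps k).2).card ≤ (S (ps k').1 (ps k').2).card)
    -- the greedy run
    (A : ℕ → Finset (Sym2 V)) (Fk : Fin N → Finset (Sym2 V))
    (hA0 : A 0 = ∅)
    (hAsucc : ∀ k : Fin N, A (k + 1) = A k ∪ Fk k)
    (hFkConn : ∀ k : Fin N, ∀ u ∈ S (ps k).1 (ps k).2, ∀ v ∈ S (ps k).1 (ps k).2,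
      (SimpleGraph.fromEdgeSet
        {e : Sym2 V | e ∈ A k ∪ Fk k ∧ ∀ w ∈ e, w ∈ S (ps k).1 (ps k).2}).Reachable u v)
    (hFkMin : ∀ k : Fin N, ∀ F' : Finset (Sym2 V),
      (∀ e ∈ F', ∀ w ∈ e, w ∈ S (ps k).1 (ps k).2) →
      (∀ u ∈ S (ps k).1 (ps k).2, ∀ v ∈ S (ps k).1 (ps k).2,
        (SimpleGraph.fromEdgeSet
          {e : Sym2 V | e ∈ A k ∪ F' ∧ ∀ w ∈ e, w ∈ S (ps k).1 (ps k).2}).Reachable u v) →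
      (Fk k).card ≤ F'.card) :
    (∀ x y, SafeWalk ↑(A N) ↑(S x y) x y) ∧
    ∀ OPT : Finset (Sym2 V), (∀ x y, SafeWalk ↑OPT ↑(S x y) x y) →
      (A N).card ≤ OPT.card := by
  classical
  set T : Fin N → Finset V := fun k => S (ps k).1 (ps k).2
  have hard (k : Fin N) : ¬ Easy S (ps k).1 (ps k).2 := (hpsHard k).2
  have hcover (u v : V) (huv : u ≠ v) (h : ¬ Easy S u v) : ∃ k, T k = S u v := by
    obtain ⟨k, hk | hk⟩ := hpsSurj u v huv h <;> exact ⟨k, by simp [T, hk, hsymm v u]⟩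
  have hconn (k : Fin N) : ConnectsWithin (A (k + 1)) (T k) := hAsucc k ▸ hFkConn k
  have hsucc (k : Fin N) : A k ⊆ A (k + 1) := hAsucc k ▸ subset_union_left
  refine ⟨fun x y => safeWalk_of_reachable_restrictGraph (hmem x y).1 ?_, fun OPT hOPT => ?_⟩
  · exact reachable_restrictGraph_of_card_lt hmem hcover hconn hsucc le_rfl x y
      fun k hk => absurd k.isLt hk.not_gt
  have hclosed (k : Fin N) (u : V) (hu : u ∈ T k) (v : V) (hv : v ∈ T k) : S u v ⊆ T k :=
    safeSet_subset_of_not_easy hsymm hhier (hard k) hu hv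
  have hdisj := pairwiseDisjoint_bridgingEdges hmem hcover hconn hsucc hclosed hpsMono OPT
  calc #(A N) ≤ ∑ k : Fin N, #(Fk k) := card_le_sum_card_of_succ_eq_union hA0 hAsucc
    _ ≤ ∑ k : Fin N, #(bridgingEdges OPT (A k) (T k)) := sum_le_sum fun k _ =>
        hFkMin k _ (fun _ => mem_of_mem_bridgingEdges)
          ((Feasible.connectsWithin_of_not_easy hsymm hhier hOPT (hard k)).union_bridgingEdges _)
    _ = #(univ.biUnion fun k : Fin N => bridgingEdges OPT (A k) (T k)) := (card_biUnion hdisj).symm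
    _ ≤ #OPT := card_le_card (biUnion_subset.2 fun k _ => bridgingEdges_subset _ _ _)

/-- The greedy algorithm — processing the hard pairs in an order monotone in
safe-set cardinality, at each step adding a minimum number of edges inside the
current safe set so as to make its restriction to the safe set connected —
produces a feasible solution of minimum cardinality. -/
theorem stmt19 {V : Type*} [Fintype V] [DecidableEq V] (S : V → V → Finset V)
    (hmem : ∀ x y, x ∈ S x y ∧ y ∈ S x y)
    (hsymm : ∀ x y, S x y = S y x)
    (hhier : ∀ x y z, z ∈ S x y → S x z ⊆ S x y ∧ S z y ⊆ S x y)
    -- `ps` is an enumeration of the hard pairs, sorted by safe-set cardinality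
    (N : ℕ) (ps : Fin N → V × V)
    (hpsHard : ∀ k, (ps k).1 ≠ (ps k).2 ∧ ¬ Easy S (ps k).1 (ps k).2)
    (hpsSurj : ∀ x y : V, x ≠ y → ¬ Easy S x y →
      ∃ k, ps k = (x, y) ∨ ps k = (y, x))
    (hpsInj : ∀ k k' : Fin N,
      (ps k' = ps k ∨ ps k' = ((ps k).2, (ps k).1)) → k' = k)
    (hpsMono : ∀ k k' : Fin N, k ≤ k' →
      (S (ps k).1 (ps k).2).card ≤ (S (ps k').1 (ps k').2).card)
    -- the greedy run
    (A : ℕ → Finset (Sym2 V)) (Fk : Fin N → Finset (Sym2 V))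
    (hA0 : A 0 = ∅)
    (hAsucc : ∀ k : Fin N, A (k + 1) = A k ∪ Fk k)
    (hFkIn : ∀ k : Fin N, ∀ e ∈ Fk k, ∀ w ∈ e, w ∈ S (ps k).1 (ps k).2)
    (hFkConn : ∀ k : Fin N, ∀ u ∈ S (ps k).1 (ps k).2, ∀ v ∈ S (ps k).1 (ps k).2,
      (SimpleGraph.fromEdgeSet
        {e : Sym2 V | e ∈ A k ∪ Fk k ∧ ∀ w ∈ e, w ∈ S (ps k).1 (ps k).2}).Reachable u v)
    (hFkMin : ∀ k : Fin N, ∀ F' : Finset (Sym2 V),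
      (∀ e ∈ F', ∀ w ∈ e, w ∈ S (ps k).1 (ps k).2) →
      (∀ u ∈ S (ps k).1 (ps k).2, ∀ v ∈ S (ps k).1 (ps k).2,
        (SimpleGraph.fromEdgeSet
          {e : Sym2 V | e ∈ A k ∪ F' ∧ ∀ w ∈ e, w ∈ S (ps k).1 (ps k).2}).Reachable u v) →
      (Fk k).card ≤ F'.card) :
    (∀ x y, SafeWalk ↑(A N) ↑(S x y) x y) ∧
    ∀ OPT : Finset (Sym2 V), (∀ x y, SafeWalk ↑OPT ↑(S x y) x y) →
      (A N).card ≤ OPT.card :=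
  stmt19_general S hmem hsymm hhier N ps hpsHard hpsSurj hpsMono A Fk hA0 hAsucc hFkConn hFkMin
end
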